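/- arXiv:math/0502410 — 9 statements merged into one kernel-verified Lean document; each statement's English description precedes it below -/
import Mathlib

section
/- A topological space X is K^θ-compact if and only if X is w-compact. -/
open Set Topology

universe u

/-- The evaluation map `Φ_X : X → I^{C(X,I)}`, `x ↦ (f(x))_{f ∈ C(X,I)}`. -/
def evalMap (X : Type u) [TopologicalSpace X] : X → (C(X, unitInterval) → unitInterval) :=
  fun x f => f x

/-- The `K^θ`-closure of a subset `A ⊆ X`:  `c^θ_X(A) = Φ_X⁻¹(cl(Φ_X(A)))`. -/
def thetaClosure (X : Type u) [TopologicalSpace X] (A : Set X) : Set X :=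
  evalMap X ⁻¹' closure (evalMap X '' A)

/-- `X` is `K^θ`-compact if all projections `π_Y : X × Y → Y` preserve the `K^θ`-closure. -/
def IsKThetaCompact (X : Type u) [TopologicalSpace X] : Prop :=
  ∀ (Y : Type u) [TopologicalSpace Y], ∀ M : Set (X × Y),
    Prod.snd '' thetaClosure (X × Y) M = thetaClosure Y (Prod.snd '' M)

/-- A cozero-set of `X`: `{x | g(x) > 0}` for some continuous `g : X → [0,1]`. -/
def IsCozeroSet (X : Type u) [TopologicalSpace X] (G : Set X) : Prop :=
  ∃ g : C(X, unitInterval), G = {x | 0 < g x}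

/-- A `τ`-open set is a union of cozero-sets. -/
def IsTauOpen (X : Type u) [TopologicalSpace X] (A : Set X) : Prop :=
  ∃ 𝒞 : Set (Set X), (∀ P ∈ 𝒞, IsCozeroSet X P) ∧ A = ⋃₀ 𝒞

/-- `X` is w-compact if every family of `τ`-open subsets of `X` with the finite intersection
property has `⋂ cl(P) ≠ ∅`. -/
def IsWCompact (X : Type u) [TopologicalSpace X] : Prop :=
  ∀ S : Set (Set X), (∀ P ∈ S, IsTauOpen X P) →
    (∀ T : Finset (Set X), ↑T ⊆ S → (⋂₀ (T : Set (Set X))).Nonempty) →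
    (⋂ P ∈ S, closure P).Nonempty

section Helpers

variable {Z : Type u} [TopologicalSpace Z]

/-- Clamp a real-valued continuous map into the unit interval. -/
noncomputable def clamp01 (h : C(Z, ℝ)) : C(Z, unitInterval) :=
  ⟨fun z => Set.projIcc (0:ℝ) 1 zero_le_one (h z),
    continuous_projIcc.comp h.continuous⟩

lemma clamp01_coe (h : C(Z, ℝ)) (z : Z) :
    (clamp01 h z : ℝ) = max 0 (min 1 (h z)) := by
  simp [clamp01, Set.projIcc]

lemma clamp01_pos_iff (h : C(Z, ℝ)) (z : Z) :
    0 < clamp01 h z ↔ 0 < h z := by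
  rw [← Subtype.coe_lt_coe]
  simp [clamp01_coe, lt_max_iff, lt_min_iff]

lemma clamp01_eq_zero_iff (h : C(Z, ℝ)) (z : Z) :
    clamp01 h z = 0 ↔ h z ≤ 0 := by
  rw [Subtype.ext_iff]
  simp [clamp01_coe, max_eq_left_iff, min_le_iff]

lemma clamp01_eq_coe (h : C(Z, ℝ)) (z : Z) (h0 : 0 ≤ h z) (h1 : h z ≤ 1) :
    (clamp01 h z : ℝ) = h z := by
  rw [clamp01_coe, min_eq_right h1, max_eq_right h0]

lemma isCozeroSet_pos (h : C(Z, ℝ)) : IsCozeroSet Z {z | 0 < h z} := by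
  refine ⟨clamp01 h, ?_⟩
  ext z; simp [clamp01_pos_iff]

end Helpers

/-- Functional characterization of the `K^θ`-closure. -/
theorem mem_thetaClosure_iff {X : Type u} [TopologicalSpace X] {A : Set X} {x : X} :
    x ∈ thetaClosure X A ↔
      ∀ f : C(X, unitInterval), (∀ a ∈ A, f a = 0) → f x = 0 := by
  constructor
  · intro hx f hf
    have hcl : IsClosed {ξ : C(X, unitInterval) → unitInterval | ξ f = 0} :=
      isClosed_singleton.preimage (continuous_apply f)
    have hsub : evalMap X '' A ⊆ {ξ | ξ f = 0} := by
      rintro _ ⟨a, ha, rfl⟩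
      exact hf a ha
    have : evalMap X x ∈ {ξ : C(X, unitInterval) → unitInterval | ξ f = 0} :=
      closure_minimal hsub hcl hx
    exact this
  · intro h
    by_contra hx
    have hcl : IsClosed (closure (evalMap X '' A)) := isClosed_closure
    obtain ⟨Fc, h0, h1, hIcc⟩ :=
      exists_continuous_zero_one_of_isClosed hcl isClosed_singleton
        (Set.disjoint_singleton_right.mpr hx)
    have hev : Continuous (evalMap X) :=
      continuous_pi fun f => f.continuous
    set f : C(X, unitInterval) := clamp01 (Fc.comp ⟨evalMap X, hev⟩) with hfdef
    have hfA : ∀ a ∈ A, f a = 0 := by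
      intro a ha
      rw [hfdef, clamp01_eq_zero_iff]
      have : Fc (evalMap X a) = 0 :=
        h0 (subset_closure (Set.mem_image_of_mem _ ha))
      simp [ContinuousMap.comp_apply, this]
    have hfx : f x = 0 := h f hfA
    have : Fc (evalMap X x) = 1 := h1 rfl
    rw [hfdef, clamp01_eq_zero_iff] at hfx
    simp [ContinuousMap.comp_apply, this] at hfx
    linarith

/-- In a w-compact space, the slices of a jointly continuous function on `X × Y`
vary uniformly (in sup norm) as the second variable moves. -/
lemma slice_uniform {X Y : Type u} [TopologicalSpace X] [TopologicalSpace Y]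
    (hw : IsWCompact X) (F : C(X × Y, unitInterval)) (b₀ : Y) {ε : ℝ} (hε : 0 < ε) :
    ∃ W ∈ 𝓝 b₀, ∀ b ∈ W, ∀ x : X,
      |(F (x, b) : ℝ) - (F (x, b₀) : ℝ)| ≤ ε := by
  by_contra hcon
  push_neg at hcon
  -- hcon : ∀ W ∈ 𝓝 b₀, ∃ b ∈ W, ∃ x, ε < |F (x,b) - F (x,b₀)|
  set TW : Set Y → Set X := fun W =>
    {x | ∃ b ∈ W, ε / 2 < |(F (x, b) : ℝ) - (F (x, b₀) : ℝ)|} with hTW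
  have hTWmono : ∀ {W W' : Set Y}, W ⊆ W' → TW W ⊆ TW W' := by
    rintro W W' hss x ⟨b, hb, hx⟩
    exact ⟨b, hss hb, hx⟩
  have hTWwit : ∀ W ∈ 𝓝 b₀, (TW W).Nonempty := by
    intro W hW
    obtain ⟨b, hb, x, hx⟩ := hcon W hW
    exact ⟨x, b, hb, by linarith⟩
  set famS : Set (Set X) := {T | ∃ W ∈ 𝓝 b₀, T = TW W} with hfamS
  have hτ : ∀ P ∈ famS, IsTauOpen X P := by
    rintro P ⟨W, hW, rfl⟩
    refine ⟨(fun b => {x | ε / 2 < |(F (x, b) : ℝ) - (F (x, b₀) : ℝ)|}) '' W, ?_, ?_⟩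
    · rintro _ ⟨b, hb, rfl⟩
      show IsCozeroSet X {x | ε / 2 < |(F (x, b) : ℝ) - (F (x, b₀) : ℝ)|}
      have : {x | ε / 2 < |(F (x, b) : ℝ) - (F (x, b₀) : ℝ)|}
          = {x | 0 < (⟨fun x => |(F (x, b) : ℝ) - (F (x, b₀) : ℝ)| - ε / 2, by
              apply Continuous.sub ?_ continuous_const
              apply Continuous.abs
              apply Continuous.sub
              · exact continuous_subtype_val.comp
                  (F.continuous.comp (continuous_id.prodMk continuous_const))
              · exact continuous_subtype_val.comp
                  (F.continuous.comp (continuous_id.prodMk continuous_const))⟩ : C(X, ℝ)) x} := by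
        ext x; simp [sub_pos]
      rw [this]
      exact isCozeroSet_pos _
    · ext x
      simp only [hTW, Set.mem_sUnion, Set.mem_image, Set.mem_setOf_eq]
      constructor
      · rintro ⟨b, hb, hx⟩
        exact ⟨_, ⟨b, hb, rfl⟩, hx⟩
      · rintro ⟨_, ⟨b, hb, rfl⟩, hx⟩
        exact ⟨b, hb, hx⟩
  have hFIP : ∀ T : Finset (Set X), ↑T ⊆ famS → (⋂₀ (T : Set (Set X))).Nonempty := by
    intro T hT
    have key : ∃ W ∈ 𝓝 b₀, ∀ t ∈ T, TW W ⊆ t := by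
      classical
      induction T using Finset.induction_on with
      | empty => exact ⟨Set.univ, Filter.univ_mem, by simp⟩
      | @insert a s ha IH =>
        have haS : a ∈ famS := hT (by simp)
        obtain ⟨Wa, hWa, rfl⟩ := haS
        obtain ⟨W', hW', hsub'⟩ := IH (fun t ht => hT (by simp [ht]))
        refine ⟨Wa ∩ W', Filter.inter_mem hWa hW', ?_⟩
        intro t ht
        rcases Finset.mem_insert.mp ht with rfl | ht'
        · exact hTWmono Set.inter_subset_left
        · exact (hTWmono Set.inter_subset_right).trans (hsub' t ht')
    obtain ⟨W, hW, hsub⟩ := key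
    obtain ⟨x, hx⟩ := hTWwit W hW
    exact ⟨x, Set.mem_sInter.mpr fun t ht => hsub t ht hx⟩
  obtain ⟨xdag, hxdag⟩ := hw famS hτ hFIP
  have hcls : ∀ P ∈ famS, xdag ∈ closure P := by
    intro P hP
    exact Set.mem_iInter₂.mp hxdag P hP
  -- joint continuity at (xdag, b₀) gives a tube
  have hV : IsOpen {u : unitInterval | |(u : ℝ) - (F (xdag, b₀) : ℝ)| < ε / 4} := by
    have : Continuous fun u : unitInterval => |(u : ℝ) - (F (xdag, b₀) : ℝ)| :=
      (continuous_subtype_val.sub continuous_const).abs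
    exact isOpen_lt this continuous_const
  have hmem : F (xdag, b₀) ∈ {u : unitInterval | |(u : ℝ) - (F (xdag, b₀) : ℝ)| < ε / 4} := by
    simp; positivity
  have hpre : F ⁻¹' {u : unitInterval | |(u : ℝ) - (F (xdag, b₀) : ℝ)| < ε / 4}
      ∈ 𝓝 (xdag, b₀) :=
    F.continuous.continuousAt.preimage_mem_nhds (hV.mem_nhds hmem)
  obtain ⟨O, hO, Wdag, hWdag, hOW⟩ := mem_nhds_prod_iff.mp hpre
  have htube : ∀ x ∈ O, ∀ b ∈ Wdag, |(F (x, b) : ℝ) - (F (x, b₀) : ℝ)| < ε / 2 := by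
    intro x hx b hb
    have h1 : |(F (x, b) : ℝ) - (F (xdag, b₀) : ℝ)| < ε / 4 := hOW (Set.mk_mem_prod hx hb)
    have h2 : |(F (x, b₀) : ℝ) - (F (xdag, b₀) : ℝ)| < ε / 4 :=
      hOW (Set.mk_mem_prod hx (mem_of_mem_nhds hWdag))
    calc |(F (x, b) : ℝ) - (F (x, b₀) : ℝ)|
        ≤ |(F (x, b) : ℝ) - (F (xdag, b₀) : ℝ)| + |(F (x, b₀) : ℝ) - (F (xdag, b₀) : ℝ)| := by
          rw [abs_sub_comm ((F (x, b₀) : ℝ))]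
          exact abs_sub_le _ _ _
      _ < ε / 2 := by linarith
  have hTmem : TW Wdag ∈ famS := ⟨Wdag, hWdag, rfl⟩
  obtain ⟨z, hzO, b, hbW, hgt⟩ :=
    mem_closure_iff_nhds.mp (hcls _ hTmem) O hO
  exact absurd (htube z hzO b hbW) (not_lt.mpr (le_of_lt hgt))

/-- Key step: if `X` is w-compact, `F` vanishes on `M` and `y` is in the `K^θ`-closure of
`π₂(M)`, then `F(·, y)` gets below any positive `δ`. -/
lemma inf_slice_zero {X Y : Type u} [TopologicalSpace X] [TopologicalSpace Y]
    (hw : IsWCompact X) (hX : Nonempty X) {M : Set (X × Y)} {y : Y}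
    (hy : y ∈ thetaClosure Y (Prod.snd '' M))
    (F : C(X × Y, unitInterval)) (hF : ∀ m ∈ M, F m = 0)
    {δ : ℝ} (hδ : 0 < δ) : ∃ x : X, (F (x, y) : ℝ) < δ := by
  by_contra h
  push_neg at h
  -- h : ∀ x, δ ≤ F (x, y)
  set g : Y → ℝ := fun b => ⨅ x : X, (F (x, b) : ℝ) with hgdef
  have hbdd : ∀ b : Y, BddBelow (Set.range fun x : X => (F (x, b) : ℝ)) := by
    intro b
    exact ⟨0, by rintro _ ⟨x, rfl⟩; exact (F (x, b)).2.1⟩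
  have hg_le : ∀ (b : Y) (x : X), g b ≤ (F (x, b) : ℝ) := fun b x => ciInf_le (hbdd b) x
  have hgy : δ ≤ g y := le_ciInf fun x => h x
  have hgcont : Continuous g := by
    rw [continuous_iff_continuousAt]
    intro b₀
    rw [ContinuousAt, Metric.tendsto_nhds]
    intro ε hε
    obtain ⟨W, hW, hWp⟩ := slice_uniform hw F b₀ (half_pos hε)
    filter_upwards [hW] with b hb
    have h1 : g b ≤ g b₀ + ε / 2 := by
      have : ∀ x : X, g b - ε / 2 ≤ (F (x, b₀) : ℝ) := by
        intro x
        have hb' := hWp b hb x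
        rw [abs_sub_le_iff] at hb'
        have := hg_le b x
        linarith [hb'.1, hb'.2]
      have := le_ciInf this
      linarith
    have h2 : g b₀ ≤ g b + ε / 2 := by
      have : ∀ x : X, g b₀ - ε / 2 ≤ (F (x, b) : ℝ) := by
        intro x
        have hb' := hWp b hb x
        rw [abs_sub_le_iff] at hb'
        have := hg_le b₀ x
        linarith [hb'.1, hb'.2]
      have := le_ciInf this
      linarith
    rw [Real.dist_eq, abs_sub_lt_iff]
    constructor <;> linarith
  set gc : C(Y, unitInterval) :=
    clamp01 ⟨fun b => g b - δ / 2, hgcont.sub continuous_const⟩ with hgcdef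
  have hgcy : gc y ≠ 0 := by
    rw [hgcdef, Ne, clamp01_eq_zero_iff]
    simp only [ContinuousMap.coe_mk]
    push_neg
    linarith
  have hthm := mem_thetaClosure_iff.mp hy gc
  obtain ⟨v, hvmem, hvne⟩ : ∃ v ∈ Prod.snd '' M, gc v ≠ 0 := by
    by_contra hall
    push_neg at hall
    exact hgcy (hthm hall)
  obtain ⟨m, hm, rfl⟩ := hvmem
  have hv' : δ / 2 < g m.2 := by
    rw [hgcdef, Ne, clamp01_eq_zero_iff] at hvne
    simp only [ContinuousMap.coe_mk] at hvne
    linarith [not_le.mp hvne]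
  have : g m.2 ≤ 0 := by
    have h0 : (F (m.1, m.2) : ℝ) = 0 := by
      have := hF m hm
      rw [show (m.1, m.2) = m from rfl, this]
      rfl
    have := hg_le m.2 m.1
    linarith
  linarith


theorem wcompact_imp_ktheta {X : Type u} [TopologicalSpace X]
    (hw : IsWCompact X) : IsKThetaCompact X := by
  intro Y _ M
  apply Set.Subset.antisymm
  · -- easy inclusion
    rintro _ ⟨p, hp, rfl⟩
    rw [mem_thetaClosure_iff] at hp ⊢
    intro g hg
    exact hp (g.comp ⟨Prod.snd, continuous_snd⟩)
      (fun m hm => hg m.2 ⟨m, hm, rfl⟩)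
  · -- hard inclusion
    intro y hy
    rcases Set.eq_empty_or_nonempty M with hM | hM
    · exfalso
      rw [hM] at hy
      simp [thetaClosure] at hy
    have hX : Nonempty X := ⟨hM.choose.1⟩
    have hslice : ∀ F : C(X × Y, unitInterval),
        Continuous fun x : X => (F (x, y) : ℝ) := by
      intro F
      exact continuous_subtype_val.comp
        (F.continuous.comp (continuous_id.prodMk continuous_const))
    set famS : Set (Set X) := {P | ∃ (F : C(X × Y, unitInterval)) (δ : ℝ),
      0 < δ ∧ (∀ m ∈ M, F m = 0) ∧ P = {x | (F (x, y) : ℝ) < δ}} with hfamS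
    have hτ : ∀ P ∈ famS, IsTauOpen X P := by
      rintro P ⟨F, δ, hδ, hvan, rfl⟩
      refine ⟨{{x | (F (x, y) : ℝ) < δ}}, ?_, (Set.sUnion_singleton _).symm⟩
      intro P' hP'
      rw [Set.mem_singleton_iff] at hP'
      subst hP'
      have : {x | (F (x, y) : ℝ) < δ}
          = {x | 0 < (⟨fun x => δ - (F (x, y) : ℝ),
              continuous_const.sub (hslice F)⟩ : C(X, ℝ)) x} := by
        ext x; simp [sub_pos]
      rw [this]
      exact isCozeroSet_pos _
    have hFIP : ∀ T : Finset (Set X), ↑T ⊆ famS → (⋂₀ (T : Set (Set X))).Nonempty := by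
      intro T hT
      have key : ∃ (F : C(X × Y, unitInterval)) (δ : ℝ),
          0 < δ ∧ (∀ m ∈ M, F m = 0) ∧
          {x | (F (x, y) : ℝ) < δ} ⊆ ⋂₀ (T : Set (Set X)) := by
        classical
        induction T using Finset.induction_on with
        | empty =>
          refine ⟨ContinuousMap.const _ 0, 1, one_pos, fun _ _ => rfl, ?_⟩
          simp
        | @insert a s ha IH =>
          have haS : a ∈ famS := hT (by simp)
          obtain ⟨F₁, δ₁, hδ₁, hv₁, hPa⟩ := haS
          obtain ⟨F₂, δ₂, hδ₂, hv₂, hsub₂⟩ := IH (fun t ht => hT (by simp [ht]))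
          set Fm : C(X × Y, unitInterval) :=
            clamp01 ⟨fun p => max (F₁ p : ℝ) (F₂ p : ℝ),
              (continuous_subtype_val.comp F₁.continuous).max
                (continuous_subtype_val.comp F₂.continuous)⟩ with hFm
          have hFmcoe : ∀ p : X × Y, (Fm p : ℝ) = max (F₁ p : ℝ) (F₂ p : ℝ) := by
            intro p
            rw [hFm]
            refine clamp01_eq_coe _ _ ?_ ?_
            · exact le_max_of_le_left (F₁ p).2.1
            · exact max_le (F₁ p).2.2 (F₂ p).2.2
          refine ⟨Fm, min δ₁ δ₂, lt_min hδ₁ hδ₂, ?_, ?_⟩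
          · intro m hm
            have e1 : (F₁ m : ℝ) = 0 := by rw [hv₁ m hm]; rfl
            have e2 : (F₂ m : ℝ) = 0 := by rw [hv₂ m hm]; rfl
            have : (Fm m : ℝ) = 0 := by rw [hFmcoe, e1, e2]; simp
            exact Subtype.ext this
          · intro x hx
            simp only [Set.mem_setOf_eq, hFmcoe, max_lt_iff, lt_min_iff] at hx
            rw [Finset.coe_insert, Set.sInter_insert]
            constructor
            · rw [hPa]
              exact Set.mem_setOf_eq ▸ hx.1.1
            · exact hsub₂ (by simpa using hx.2.2)
      obtain ⟨F, δ, hδ, hvan, hsub⟩ := key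
      obtain ⟨x, hx⟩ := inf_slice_zero hw hX hy F hvan hδ
      exact ⟨x, hsub hx⟩
    obtain ⟨xd, hxd⟩ := hw famS hτ hFIP
    have hcls : ∀ P ∈ famS, xd ∈ closure P := fun P hP => Set.mem_iInter₂.mp hxd P hP
    refine ⟨(xd, y), ?_, rfl⟩
    rw [mem_thetaClosure_iff]
    intro F hvan
    have hle : ∀ δ : ℝ, 0 < δ → (F (xd, y) : ℝ) ≤ δ := by
      intro δ hδ
      have hPmem : {x | (F (x, y) : ℝ) < δ} ∈ famS := ⟨F, δ, hδ, hvan, rfl⟩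
      have hclosed : IsClosed {x : X | (F (x, y) : ℝ) ≤ δ} :=
        isClosed_le (hslice F) continuous_const
      have : closure {x : X | (F (x, y) : ℝ) < δ} ⊆ {x : X | (F (x, y) : ℝ) ≤ δ} :=
        closure_minimal (fun x hx => le_of_lt (Set.mem_setOf_eq ▸ hx)) hclosed
      exact this (hcls _ hPmem)
    have h0 : (F (xd, y) : ℝ) ≤ 0 := by
      by_contra hpos
      push_neg at hpos
      have := hle ((F (xd, y) : ℝ) / 2) (by linarith)
      linarith
    exact Subtype.ext (le_antisymm h0 (F (xd, y)).2.1)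

section Mrowka

variable {X : Type u} [TopologicalSpace X]

/-- Index type for the Mrówka-type test space: pairs of a point and a finite
subfamily of `S` whose intersection contains the point. -/
def MrD (X : Type u) [TopologicalSpace X] (S : Set (Set X)) : Type u :=
  {d : X × Finset (Set X) // ↑d.2 ⊆ S ∧ d.1 ∈ ⋂₀ (d.2 : Set (Set X))}

/-- Basic neighborhoods of the point at infinity. -/
def mrNF (S : Set (Set X)) (F : Finset (Set X)) : Set (Option (MrD X S)) :=
  {yy | ∀ d : MrD X S, yy = some d → F ⊆ d.val.2}

/-- The topology on the Mrówka-type test space: all points of `MrD` are isolated,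
and the point at infinity `none` has the `mrNF` sets as a neighborhood base. -/
def mrTop (S : Set (Set X)) : TopologicalSpace (Option (MrD X S)) where
  IsOpen U := none ∈ U → ∃ F : Finset (Set X), ↑F ⊆ S ∧ mrNF S F ⊆ U
  isOpen_univ := fun _ => ⟨∅, by simp, Set.subset_univ _⟩
  isOpen_inter := by
    classical
    intro U V hU hV hnone
    obtain ⟨F₁, hF₁, hsub₁⟩ := hU hnone.1
    obtain ⟨F₂, hF₂, hsub₂⟩ := hV hnone.2
    refine ⟨F₁ ∪ F₂, by rw [Finset.coe_union]; exact Set.union_subset hF₁ hF₂, ?_⟩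
    intro yy hyy
    have h1 : yy ∈ mrNF S F₁ := fun d hd =>
      (Finset.union_subset_iff.mp (hyy d hd)).1
    have h2 : yy ∈ mrNF S F₂ := fun d hd =>
      (Finset.union_subset_iff.mp (hyy d hd)).2
    exact ⟨hsub₁ h1, hsub₂ h2⟩
  isOpen_sUnion := by
    intro 𝒮 h hnone
    obtain ⟨U, hU, hnU⟩ := hnone
    obtain ⟨F, hF, hsub⟩ := h U hU hnU
    exact ⟨F, hF, hsub.trans (Set.subset_sUnion_of_mem hU)⟩

lemma mrTop_isOpen_iff (S : Set (Set X)) (U : Set (Option (MrD X S))) :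
    IsOpen[mrTop S] U ↔ (none ∈ U → ∃ F : Finset (Set X), ↑F ⊆ S ∧ mrNF S F ⊆ U) :=
  Iff.rfl

lemma mem_mrNF_some (S : Set (Set X)) (F : Finset (Set X)) (d : MrD X S) :
    some d ∈ mrNF S F ↔ F ⊆ d.val.2 := by
  constructor
  · intro h; exact h d rfl
  · intro h d' hd'
    rw [Option.some.injEq] at hd'
    subst hd'; exact h

lemma mem_mrNF_none (S : Set (Set X)) (F : Finset (Set X)) :
    (none : Option (MrD X S)) ∈ mrNF S F := by
  intro d hd; exact absurd hd (by simp)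

/-- From a τ-open set containing a point, extract a cozero function witnessing it. -/
lemma exists_cozero_fun {P : Set X} (hP : IsTauOpen X P) {b : X} (hb : b ∈ P) :
    ∃ g : C(X, unitInterval), 0 < g b ∧ ∀ x, 0 < g x → x ∈ P := by
  obtain ⟨𝒞, h𝒞, rfl⟩ := hP
  obtain ⟨C, hC𝒞, hbC⟩ := hb
  obtain ⟨g, rfl⟩ := h𝒞 C hC𝒞
  exact ⟨g, hbC, fun x hx => ⟨_, hC𝒞, hx⟩⟩

theorem ktheta_imp_wcompact (hK : IsKThetaCompact X) : IsWCompact X := by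
  classical
  intro S hSτ hFIP
  by_contra hne
  rw [Set.not_nonempty_iff_eq_empty] at hne
  have hE : ∀ x : X, ∃ P ∈ S, x ∉ closure P := by
    intro x
    by_contra hcon
    push_neg at hcon
    have : x ∈ ⋂ P ∈ S, closure P := Set.mem_iInter₂.mpr hcon
    rw [hne] at this
    exact this
  -- construct the bump functions
  have hsel : ∀ d : MrD X S, ∃ w : C(X, ℝ),
      w d.val.1 = 1 ∧ (∀ x, 0 ≤ w x) ∧ (∀ x, w x ≤ 1) ∧
      (∀ P ∈ d.val.2, ∀ x, x ∉ P → w x = 0) := by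
    intro d
    have hmem : ∀ P : {P // P ∈ d.val.2}, d.val.1 ∈ (P : Set X) := by
      intro P
      exact Set.mem_sInter.mp d.prop.2 P.1 (Finset.mem_coe.mpr P.2)
    choose g hg1 hg2 using fun P : {P // P ∈ d.val.2} =>
      exists_cozero_fun (hSτ P.1 (d.prop.1 (Finset.mem_coe.mpr P.2))) (hmem P)
    refine ⟨⟨fun x => ∏ P ∈ d.val.2.attach,
        min 1 ((g ⟨P.1, P.2⟩ x : ℝ) / (g ⟨P.1, P.2⟩ d.val.1 : ℝ)), ?_⟩, ?_, ?_, ?_, ?_⟩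
    · apply continuous_finset_prod
      intro P _
      exact continuous_const.min
        ((continuous_subtype_val.comp (g _).continuous).div_const _)
    · show (∏ P ∈ d.val.2.attach, _) = (1:ℝ)
      apply Finset.prod_eq_one
      intro P _
      rw [div_self (ne_of_gt ?_), min_self]
      exact_mod_cast hg1 ⟨P.1, P.2⟩
    · intro x
      show (0:ℝ) ≤ ∏ P ∈ d.val.2.attach, _
      apply Finset.prod_nonneg
      intro P _
      apply le_min zero_le_one
      apply div_nonneg (g _ x).2.1
      exact le_of_lt (by exact_mod_cast hg1 ⟨P.1, P.2⟩)
    · intro x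
      show (∏ P ∈ d.val.2.attach, _) ≤ (1:ℝ)
      apply Finset.prod_le_one
      · intro P _
        apply le_min zero_le_one
        apply div_nonneg (g _ x).2.1
        exact le_of_lt (by exact_mod_cast hg1 ⟨P.1, P.2⟩)
      · intro P _
        exact min_le_left _ _
    · intro P hP x hx
      show (∏ Q ∈ d.val.2.attach, _) = (0:ℝ)
      apply Finset.prod_eq_zero (Finset.mem_attach _ ⟨P, hP⟩)
      have hzero : (g ⟨P, hP⟩ x : ℝ) = 0 := by
        have : ¬ (0 < g ⟨P, hP⟩ x) := fun hpos => hx (hg2 ⟨P, hP⟩ x hpos)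
        have hle : (g ⟨P, hP⟩ x : ℝ) ≤ 0 := by
          by_contra hgt
          push_neg at hgt
          exact this (by exact_mod_cast hgt)
        exact le_antisymm hle (g ⟨P, hP⟩ x).2.1
      rw [hzero, zero_div]
      exact min_eq_right zero_le_one
  choose w hw1 hw0 hwle hwz using hsel
  letI : TopologicalSpace (Option (MrD X S)) := mrTop S
  set M : Set (X × Option (MrD X S)) := {p | ∃ d : MrD X S, p = (d.val.1, some d)}
    with hMdef
  -- the function separating `X × {∞}` from `M`
  have hFex : ∃ Fs : C(X × Option (MrD X S), unitInterval),
      (∀ m ∈ M, Fs m = 0) ∧ (∀ x : X, Fs (x, none) = 1) := by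
    have hcont : Continuous fun p : X × Option (MrD X S) =>
        (p.2.elim (1:ℝ) fun d => 1 - w d p.1) := by
      rw [continuous_iff_continuousAt]
      rintro ⟨x₀, yy⟩
      cases yy with
      | some d =>
        have hopen : IsOpen ((Set.univ : Set X) ×ˢ ({some d} : Set (Option (MrD X S)))) := by
          apply IsOpen.prod isOpen_univ
          rw [mrTop_isOpen_iff]
          intro h
          exact absurd h (by simp)
        have hmem : (x₀, some d) ∈
            ((Set.univ : Set X) ×ˢ ({some d} : Set (Option (MrD X S)))) :=
          ⟨trivial, rfl⟩
        have heq : (fun p : X × Option (MrD X S) => (p.2.elim (1:ℝ) fun d' => 1 - w d' p.1))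
            =ᶠ[𝓝 (x₀, some d)] (fun p => 1 - w d p.1) := by
          filter_upwards [hopen.mem_nhds hmem] with p hp
          have : p.2 = some d := hp.2
          rw [this]
          rfl
        apply ContinuousAt.congr ?_ heq.symm
        exact (continuous_const.sub ((w d).continuous.comp continuous_fst)).continuousAt
      | none =>
        obtain ⟨P₀, hP₀S, hx₀⟩ := hE x₀
        have hopen : IsOpen (((closure P₀)ᶜ : Set X) ×ˢ (mrNF S {P₀})) := by
          apply IsOpen.prod (isOpen_compl_iff.mpr isClosed_closure)
          rw [mrTop_isOpen_iff]
          intro _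
          exact ⟨{P₀}, by simpa using hP₀S, subset_rfl⟩
        have hmem : (x₀, (none : Option (MrD X S))) ∈
            (((closure P₀)ᶜ : Set X) ×ˢ (mrNF S {P₀})) :=
          ⟨hx₀, mem_mrNF_none S {P₀}⟩
        have heq : (fun p : X × Option (MrD X S) => (p.2.elim (1:ℝ) fun d' => 1 - w d' p.1))
            =ᶠ[𝓝 (x₀, none)] (fun _ => (1:ℝ)) := by
          filter_upwards [hopen.mem_nhds hmem] with p hp
          rcases hp with ⟨hp1, hp2⟩
          match hq : p.2 with
          | none => simp
          | some d =>
            rw [hq] at hp2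
            have hPd : P₀ ∈ d.val.2 := by
              have := (mem_mrNF_some S {P₀} d).mp hp2
              exact Finset.singleton_subset_iff.mp this
            have hxP : p.1 ∉ P₀ := fun hmem' => hp1 (subset_closure hmem')
            simp only [Option.elim]
            rw [hwz d P₀ hPd p.1 hxP]
            ring
        apply ContinuousAt.congr ?_ heq.symm
        exact continuousAt_const
    refine ⟨clamp01 ⟨_, hcont⟩, ?_, ?_⟩
    · rintro m ⟨d, rfl⟩
      rw [clamp01_eq_zero_iff]
      simp only [ContinuousMap.coe_mk, Option.elim]
      rw [hw1 d]
      simp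
    · intro x
      have : (clamp01 ⟨_, hcont⟩ (x, (none : Option (MrD X S))) : ℝ) = 1 := by
        rw [clamp01_eq_coe]
        · rfl
        · norm_num
        · norm_num
      exact Subtype.ext this
  obtain ⟨Fs, hFs0, hFs1⟩ := hFex
  -- the point at infinity is in the θ-closure of the projection of M
  have h1 : (none : Option (MrD X S)) ∈
      thetaClosure (Option (MrD X S)) (Prod.snd '' M) := by
    rw [mem_thetaClosure_iff]
    intro g hg
    by_contra hgne
    have hgpos : (0:ℝ) < (g none : ℝ) := by
      rcases lt_or_eq_of_le (g none).2.1 with h | h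
      · exact h
      · exact absurd (Subtype.ext h.symm) hgne
    have hUopen : IsOpen (g ⁻¹' {u : unitInterval | (0:ℝ) < (u : ℝ)}) :=
      (IsOpen.preimage continuous_subtype_val isOpen_Ioi).preimage g.continuous
    obtain ⟨F, hFS, hNF⟩ := (mrTop_isOpen_iff S _).mp hUopen hgpos
    obtain ⟨b, hb⟩ := hFIP F hFS
    set d : MrD X S := ⟨(b, F), hFS, hb⟩ with hd
    have hdU : some d ∈ g ⁻¹' {u : unitInterval | (0:ℝ) < (u : ℝ)} := by
      apply hNF
      rw [mem_mrNF_some]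
    have hz : g (some d) = 0 := hg (some d) ⟨(d.val.1, some d), ⟨d, rfl⟩, rfl⟩
    have hdU2 : (0:ℝ) < ((g (some d)) : ℝ) := hdU
    rw [hz] at hdU2
    simp at hdU2
  -- apply K^θ-compactness and derive a contradiction
  have heq := hK (Option (MrD X S)) M
  rw [← heq] at h1
  obtain ⟨p, hp, hps⟩ := h1
  have hF0 : Fs p = 0 := mem_thetaClosure_iff.mp hp Fs hFs0
  have hF1 : Fs p = 1 := by
    have hpfst : p = (p.1, none) := by
      rw [← hps]
    rw [hpfst]
    exact hFs1 p.1
  rw [hF0] at hF1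
  have : (0:ℝ) = 1 := congrArg Subtype.val hF1
  norm_num at this

end Mrowka

/-- A topological space `X` is `K^θ`-compact if and only if it is w-compact. -/
theorem isKThetaCompact_iff_isWCompact (X : Type u) [TopologicalSpace X] :
    IsKThetaCompact X ↔ IsWCompact X :=
  ⟨ktheta_imp_wcompact, wcompact_imp_ktheta⟩
end

section
/- Let X be a topological space such that every point x ∈ X is contained in some cozero-set W whose closure cl_X(W), endowed with the subspace topology, is w-compact. Then the following are equivalent: (i) X is K^θ-compact; (ii) X is w-compact; (iii) the image τX = Φ_X(X) is a compact subset of I^{C(X,I)}. -/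
open Set Topology

universe u

/-!
Call `x` a θ-cluster point of a filter `F` on `X` if every neighbourhood of `x` in the topology
induced by `C(X, I)` meets every member of `F`, i.e. if `Φ_X x` is a cluster point of `Φ_X(F)`.
If `τX` is compact, every proper filter has a θ-cluster point. So it has if `X` is
`K^θ`-compact: apply the definition to `X` with one extra point whose neighbourhoods are the
traces of `F`, and to the graph of the inclusion. At a θ-cluster point `x` the hypothesis provides
a w-compact θ-neighbourhood `cl W` of `x`, and w-compactness of `cl W` yields a point adherent to
every τ-open member of `F`; so in both cases `X` is w-compact.

If `X` is w-compact, `τX` is closed, hence compact: a point of its closure is the image of any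
point adherent to all τ-open traces of its neighbourhoods. Finally, let `τX` be compact and
`y ∈ c^θ_Y(π_Y M)`. The points of `M` over θ-neighbourhoods of `y` form a proper filter, and a
θ-cluster point `x` of its first projection satisfies `(x, y) ∈ c^θ_{X×Y}(M)`: w-compactness of
`cl W` makes `b ↦ sup_{a ∈ cl W} |h(a, b) - h(a, y)|` continuous (a tube lemma for w-compact
spaces), so θ-closeness to `y` in `Y` controls every `h` uniformly on `cl W`.
-/

open Filter

section

variable {X Y : Type u} [TopologicalSpace X] [TopologicalSpace Y]

lemma isCozeroSet_setOf_lt {u v : X → ℝ} (hu : Continuous u) (hv : Continuous v) :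
    IsCozeroSet X {x | u x < v x} := by
  refine ⟨⟨fun x => projIcc 0 1 zero_le_one (v x - u x), by fun_prop⟩, ?_⟩
  ext x
  simp [unitInterval.pos_iff_ne_zero, projIcc_eq_zero]

lemma IsCozeroSet.isTauOpen {P : Set X} (hP : IsCozeroSet X P) : IsTauOpen X P :=
  ⟨{P}, by simpa using hP, sUnion_singleton P |>.symm⟩

lemma IsCozeroSet.preimage {f : X → Y} (hf : Continuous f) {P : Set Y} (hP : IsCozeroSet Y P) :
    IsCozeroSet X (f ⁻¹' P) := by
  obtain ⟨g, rfl⟩ := hP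
  exact ⟨g.comp ⟨f, hf⟩, rfl⟩

lemma IsTauOpen.preimage {f : X → Y} (hf : Continuous f) {P : Set Y} (hP : IsTauOpen Y P) :
    IsTauOpen X (f ⁻¹' P) := by
  obtain ⟨𝒞, h𝒞, rfl⟩ := hP
  refine ⟨Set.preimage f '' 𝒞, ?_, by rw [preimage_sUnion, sUnion_image]⟩
  rintro _ ⟨C, hC, rfl⟩
  exact (h𝒞 C hC).preimage hf

lemma IsTauOpen.iUnion {ι : Sort*} {s : ι → Set X} (hs : ∀ i, IsTauOpen X (s i)) :
    IsTauOpen X (⋃ i, s i) := by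
  choose 𝒞 h𝒞 hs𝒞 using hs
  refine ⟨⋃ i, 𝒞 i, fun P hP => ?_, by rw [sUnion_iUnion, iUnion_congr hs𝒞]⟩
  obtain ⟨i, hi⟩ := mem_iUnion.1 hP
  exact h𝒞 i P hi

/-- Neighbourhoods of `x` in the topology induced by `C(X, I)`, whose closure operator is `c^θ`;
`(thetaNhds x ⊓ F).NeBot` says that `x` is a θ-cluster point of `F`. -/
def thetaNhds (x : X) : Filter X :=
  comap (evalMap X) (𝓝 (evalMap X x))

lemma thetaNhds_eq_iInf (x : X) :
    thetaNhds x = ⨅ f : C(X, unitInterval), comap f (𝓝 (f x)) := by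
  simp only [thetaNhds, nhds_pi, Filter.pi, comap_iInf, comap_comap]
  rfl

lemma thetaNhds_hasBasis (x : X) :
    (thetaNhds x).HasBasis
      (fun Iε : Set C(X, unitInterval) × (C(X, unitInterval) → ℝ) =>
        Iε.1.Finite ∧ ∀ f ∈ Iε.1, 0 < Iε.2 f)
      (fun Iε => ⋂ f ∈ Iε.1, {a | dist (f a) (f x) < Iε.2 f}) := by
  rw [thetaNhds_eq_iInf]
  exact HasBasis.iInf' fun f : C(X, unitInterval) =>
    (Metric.nhds_basis_ball (x := (f x : unitInterval))).comap (⇑f)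

lemma tendsto_thetaNhds (f : C(X, unitInterval)) (x : X) :
    Tendsto f (thetaNhds x) (𝓝 (f x)) := by
  rw [thetaNhds_eq_iInf]
  exact tendsto_iInf' f tendsto_comap

lemma Continuous.tendsto_thetaNhds {φ : X → Y} (hφ : Continuous φ) (x : X) :
    Tendsto φ (thetaNhds x) (thetaNhds (φ x)) := by
  rw [thetaNhds_eq_iInf (φ x)]
  exact tendsto_iInf.2 fun g =>
    tendsto_comap_iff.2 (_root_.tendsto_thetaNhds (g.comp ⟨φ, hφ⟩) x)

lemma IsCozeroSet.mem_thetaNhds {W : Set X} (hW : IsCozeroSet X W) {x : X} (hx : x ∈ W) :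
    W ∈ thetaNhds x := by
  obtain ⟨g, rfl⟩ := hW
  exact tendsto_thetaNhds g x (Ioi_mem_nhds hx)

lemma thetaNhds_inf_neBot_iff {x : X} {F : Filter X} :
    (thetaNhds x ⊓ F).NeBot ↔ ClusterPt (evalMap X x) (map (evalMap X) F) := by
  rw [ClusterPt, ← Filter.push_pull', map_neBot_iff]
  rfl

lemma mem_thetaClosure_iff_s1 {x : X} {A : Set X} :
    x ∈ thetaClosure X A ↔ (thetaNhds x ⊓ 𝓟 A).NeBot := by
  rw [thetaNhds_inf_neBot_iff, map_principal, ← mem_closure_iff_clusterPt]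
  rfl

lemma closure_subset_thetaClosure (A : Set X) : closure A ⊆ thetaClosure X A :=
  fun _ hx => image_closure_subset_closure_image (continuous_pi fun f => f.continuous)
    (mem_image_of_mem _ hx)

lemma Continuous.mapsTo_thetaClosure {φ : X → Y} (hφ : Continuous φ) (A : Set X) :
    MapsTo φ (thetaClosure X A) (thetaClosure Y (φ '' A)) := fun x hx => by
  rw [mem_thetaClosure_iff_s1] at hx ⊢
  refine (hx.map φ).mono (map_inf_le.trans (inf_le_inf (hφ.tendsto_thetaNhds x) ?_))
  rw [map_principal]

lemma isWCompact_iff_forall_filter :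
    IsWCompact X ↔
      ∀ F : Filter X, F.NeBot → ∃ z, ∀ P ∈ F, IsTauOpen X P → z ∈ closure P := by
  constructor
  · intro hX F hF
    obtain ⟨z, hz⟩ := hX {P | P ∈ F ∧ IsTauOpen X P} (fun P hP => hP.2)
      (fun T hT => nonempty_of_mem ((sInter_mem T.finite_toSet).2 fun P hP => (hT hP).1))
    exact ⟨z, fun P hPF hP => mem_iInter₂.1 hz P ⟨hPF, hP⟩⟩
  · intro h S hS hfip
    have hS' : (generate S).NeBot := generate_neBot_iff.2 fun t ht htfin => by
      simpa using hfip htfin.toFinset (by simpa using ht)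
    obtain ⟨z, hz⟩ := h (generate S) hS'
    exact ⟨z, mem_iInter₂.2 fun P hP => hz P (mem_generate_of_mem hP) (hS P hP)⟩

lemma IsWCompact.exists_forall_mem_closure {Z : Set X} (hZ : IsWCompact Z) {F : Filter X}
    (hF : (𝓟 Z ⊓ F).NeBot) : ∃ z, ∀ P ∈ F, IsTauOpen X P → z ∈ closure P := by
  obtain ⟨z, hz⟩ := isWCompact_iff_forall_filter.1 hZ (comap (↑) (𝓟 Z ⊓ F))
    (hF.comap_of_range_mem (mem_inf_of_left (by simp)))
  exact ⟨z, fun P hPF hP => continuous_subtype_val.closure_preimage_subset P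
    (hz _ (preimage_mem_comap (mem_inf_of_right hPF)) (hP.preimage continuous_subtype_val))⟩

lemma IsWCompact.eventually_forall_le (hX : IsWCompact X) {u : X × Y → ℝ} (hu : Continuous u)
    {y : Y} {t : ℝ} (ht : ∀ a, u (a, y) < t) : ∀ᶠ b in 𝓝 y, ∀ a, u (a, b) ≤ t := by
  by_contra hfreq
  simp only [not_eventually, not_forall, not_le] at hfreq
  set F := map Prod.fst (comap Prod.snd (𝓝 y) ⊓ 𝓟 {p | t < u p})
  have hF : F.NeBot := by
    rw [map_neBot_iff, ← map_neBot_iff Prod.snd, Filter.push_pull', map_principal]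
    exact frequently_iff_neBot.1 (hfreq.mono fun b ⟨a, hab⟩ => ⟨(a, b), hab, rfl⟩)
  obtain ⟨z, hz⟩ := isWCompact_iff_forall_filter.1 hX F hF
  obtain ⟨U, hU, O, hO, hUO⟩ :=
    mem_nhds_prod_iff.1 (hu.continuousAt.preimage_mem_nhds (Iio_mem_nhds (ht z)))
  have hOF : (⋃ b ∈ O, {a | t < u (a, b)}) ∈ F :=
    mem_inf_of_inter (preimage_mem_comap hO) (mem_principal_self _)
      fun p hp => mem_iUnion₂.2 ⟨p.2, hp.1, hp.2⟩
  have hOτ : IsTauOpen X (⋃ b ∈ O, {a | t < u (a, b)}) :=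
    IsTauOpen.iUnion fun b => IsTauOpen.iUnion fun _ =>
      (isCozeroSet_setOf_lt continuous_const (hu.comp (Continuous.prodMk_left b))).isTauOpen
  obtain ⟨a, haU, hab⟩ := mem_closure_iff_nhds.1 (hz _ hOF hOτ) U hU
  obtain ⟨b, hbO, hab : t < u (a, b)⟩ := mem_iUnion₂.1 hab
  exact (hUO ⟨haU, hbO⟩ : u (a, b) < t).not_gt hab

lemma IsWCompact.continuous_iSup (hX : IsWCompact X) {u : X × Y → ℝ} (hu : Continuous u)
    (hbdd : BddAbove (range u)) : Continuous fun b => ⨆ a, u (a, b) := by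
  rcases isEmpty_or_nonempty X with hX' | hX'
  · simp only [Real.iSup_of_isEmpty]
    exact continuous_const
  have hbdd' (b : Y) : BddAbove (range fun a => u (a, b)) :=
    hbdd.mono (range_subset_iff.2 fun a => mem_range_self _)
  refine continuous_iff_continuousAt.2 fun y => tendsto_order.2 ⟨fun t ht => ?_, fun t ht => ?_⟩
  · obtain ⟨a, ha⟩ := exists_lt_of_lt_ciSup ht
    exact ((hu.comp (Continuous.prodMk_right a)).continuousAt.eventually (lt_mem_nhds ha)).mono
      fun b hb => hb.trans_le (le_ciSup (hbdd' b) a)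
  · obtain ⟨t', hyt', ht'⟩ := exists_between ht
    exact (hX.eventually_forall_le hu fun a => (le_ciSup (hbdd' y) a).trans_lt hyt').mono
      fun b hb => (ciSup_le hb).trans_lt ht'

lemma IsWCompact.exists_continuousMap_dist_le {Z : Set X} (hZ : IsWCompact Z)
    (h : C(X × Y, unitInterval)) (y : Y) :
    ∃ σ : C(Y, unitInterval),
      ∀ a ∈ Z, ∀ b, dist (h (a, b)) (h (a, y)) ≤ dist (σ b) (σ y) := by
  set u : Z × Y → ℝ := fun p => dist (h (p.1, p.2)) (h (p.1, y))
  have hu1 (p : Z × Y) : u p ≤ 1 := Real.dist_le_of_mem_Icc_01 (h _).2 (h _).2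
  set s : Y → ℝ := fun b => ⨆ a : Z, u (a, b)
  have hs0 (b : Y) : 0 ≤ s b := Real.iSup_nonneg fun _ => dist_nonneg
  have hs1 (b : Y) : s b ≤ 1 := Real.iSup_le (fun _ => hu1 _) zero_le_one
  have hsy : s y = 0 := le_antisymm (Real.iSup_le (fun _ => by simp [u]) le_rfl) (hs0 y)
  have hs : Continuous s := hZ.continuous_iSup (by fun_prop) ⟨1, forall_mem_range.2 hu1⟩
  refine ⟨⟨fun b => ⟨s b, hs0 b, hs1 b⟩, hs.subtype_mk _⟩, fun a ha b => ?_⟩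
  calc dist (h (a, b)) (h (a, y)) = u (⟨a, ha⟩, b) := rfl
    _ ≤ s b :=
      le_ciSup (f := fun a => u (a, b)) ⟨1, forall_mem_range.2 fun _ => hu1 _⟩ ⟨a, ha⟩
    _ = dist (s b) (s y) := by rw [Real.dist_eq, hsy, sub_zero, abs_of_nonneg (hs0 b)]

lemma IsWCompact.isCompact_range_evalMap (hX : IsWCompact X) : IsCompact (range (evalMap X)) := by
  refine (isClosed_of_closure_subset fun p hp => ?_).isCompact
  have hF : (comap (evalMap X) (𝓝 p)).NeBot := comap_neBot_iff.2 fun t ht =>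
    let ⟨_, hpt, x, hx⟩ := mem_closure_iff_nhds.1 hp t ht
    ⟨x, hx ▸ hpt⟩
  obtain ⟨z, hz⟩ := isWCompact_iff_forall_filter.1 hX _ hF
  refine ⟨z, funext fun f => eq_of_forall_dist_le fun ε hε => ?_⟩
  have hP : {a | dist (f a) (p f) < ε} ∈ comap (evalMap X) (𝓝 p) :=
    preimage_mem_comap (m := evalMap X) <|
      (continuous_apply f).continuousAt.preimage_mem_nhds (Metric.ball_mem_nhds (p f) hε)
  have hd : Continuous fun a => dist (f a) (p f) := by fun_prop
  exact closure_minimal (fun a ha => le_of_lt ha) (isClosed_le hd continuous_const)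
    (hz _ hP (isCozeroSet_setOf_lt hd continuous_const).isTauOpen)

lemma exists_thetaNhds_inf_neBot_of_isCompact_range (hc : IsCompact (range (evalMap X)))
    (F : Filter X) [F.NeBot] : ∃ x, (thetaNhds x ⊓ F).NeBot := by
  obtain ⟨_, ⟨x, rfl⟩, hx⟩ := hc.exists_clusterPt (f := map (evalMap X) F)
    (tendsto_principal.2 (Eventually.of_forall mem_range_self))
  exact ⟨x, thetaNhds_inf_neBot_iff.2 hx⟩

lemma IsKThetaCompact.exists_thetaNhds_inf_neBot (hk : IsKThetaCompact X) (F : Filter X)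
    [F.NeBot] : ∃ x, (thetaNhds x ⊓ F).NeBot := by
  classical
  let _ : TopologicalSpace (Option X) := nhdsAdjoint none (map some F)
  set M : Set (X × Option X) := range fun a => (a, some a)
  have hnone : none ∈ thetaClosure (Option X) (Prod.snd '' M) := by
    rw [← range_comp]
    refine closure_subset_thetaClosure _
      (mem_closure_of_tendsto (b := F) ?_ (Eventually.of_forall mem_range_self))
    rw [nhds_nhdsAdjoint_same]
    exact tendsto_map.mono_right le_sup_right
  rw [← hk (Option X) M] at hnone
  obtain ⟨⟨x, _⟩, hxb, rfl⟩ := hnone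
  refine ⟨x, inf_neBot_iff.2 fun U hU s hs => ?_⟩
  let k : C(Option X, unitInterval) :=
    ⟨fun z => z.elim 1 fun a => if a ∈ s then 1 else 0, continuous_nhdsAdjoint_dom.2 <|
      tendsto_map'_iff.2 <| tendsto_const_nhds.congr' <|
        eventually_of_mem hs fun a ha => (if_pos ha).symm⟩
  obtain ⟨_, ⟨haU, hka⟩, a, rfl⟩ := inf_principal_neBot_iff.1 (mem_thetaClosure_iff_s1.1 hxb) _
    (((continuous_fst.tendsto_thetaNhds (x, none)).eventually hU).and
      ((tendsto_thetaNhds (k.comp ⟨Prod.snd, continuous_snd⟩) (x, none)).eventually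
        (isOpen_ne.mem_nhds one_ne_zero)))
  refine ⟨a, haU, ?_⟩
  by_contra has
  exact hka (if_neg has)

lemma isWCompact_of_forall_exists_thetaNhds_inf_neBot
    (hloc : ∀ x : X, ∃ Z ∈ thetaNhds x, IsWCompact Z)
    (h : ∀ F : Filter X, F.NeBot → ∃ x, (thetaNhds x ⊓ F).NeBot) : IsWCompact X :=
  isWCompact_iff_forall_filter.2 fun F hF => by
    obtain ⟨x, hx⟩ := h F hF
    obtain ⟨Z, hZx, hZ⟩ := hloc x
    exact hZ.exists_forall_mem_closure (hx.mono (inf_le_inf_right F (le_principal_iff.2 hZx)))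

lemma isKThetaCompact_of_isCompact_range (hloc : ∀ x : X, ∃ Z ∈ thetaNhds x, IsWCompact Z)
    (hc : IsCompact (range (evalMap X))) : IsKThetaCompact X := by
  intro Y _ M
  refine (continuous_snd.mapsTo_thetaClosure M).image_subset.antisymm fun y hy => ?_
  rw [mem_thetaClosure_iff_s1] at hy
  set 𝓕 := comap Prod.snd (thetaNhds y) ⊓ 𝓟 M
  have h𝓕 : 𝓕.NeBot := by rwa [← map_neBot_iff Prod.snd, Filter.push_pull', map_principal]
  have h𝓕snd : Tendsto Prod.snd 𝓕 (thetaNhds y) := tendsto_comap.mono_left inf_le_left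
  obtain ⟨x, hx⟩ := exists_thetaNhds_inf_neBot_of_isCompact_range hc (map Prod.fst 𝓕)
  obtain ⟨Z, hZx, hZ⟩ := hloc x
  refine ⟨(x, y), ?_, rfl⟩
  rw [mem_thetaClosure_iff_s1, (thetaNhds_hasBasis _).inf_principal_neBot_iff]
  rintro ⟨H, ε⟩ ⟨hH, hε⟩
  choose σ hσ using fun g : C(X × Y, unitInterval) => hZ.exists_continuousMap_dist_le g y
  have hfst : ∀ᶠ a in thetaNhds x, a ∈ Z ∧ ∀ g ∈ H, dist (g (a, y)) (g (x, y)) < ε g / 2 :=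
    Eventually.and hZx <| (eventually_all_finite hH).2 fun g hg =>
      tendsto_thetaNhds (g.comp ⟨fun a => (a, y), Continuous.prodMk_left y⟩) x
        (Metric.ball_mem_nhds _ (half_pos (hε g hg)))
  have hsnd : ∀ᶠ m in 𝓕, m ∈ M ∧ ∀ g ∈ H, dist (σ g m.2) (σ g y) < ε g / 2 :=
    Eventually.and (mem_inf_of_right (mem_principal_self M)) <|
      (eventually_all_finite hH).2 fun g hg =>
        ((tendsto_thetaNhds (σ g) y).comp h𝓕snd).eventually
          (Metric.ball_mem_nhds _ (half_pos (hε g hg)))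
  obtain ⟨m, ⟨hmZ, hm₁⟩, hmM, hm₂⟩ :=
    ((frequently_map.1 (inf_neBot_iff_frequently_left.1 hx hfst)).and_eventually hsnd).exists
  refine ⟨m, mem_iInter₂.2 fun g hg => ?_, hmM⟩
  calc dist (g m) (g (x, y)) ≤ dist (g m) (g (m.1, y)) + dist (g (m.1, y)) (g (x, y)) :=
        dist_triangle _ _ _
    _ < ε g / 2 + ε g / 2 :=
        add_lt_add ((hσ g m.1 hmZ m.2).trans_lt (hm₂ g hg)) (hm₁ g hg)
    _ = ε g := add_halves _

end

/-- If every point of `X` has a cozero neighbourhood with w-compact closure, then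
`K^θ`-compactness, w-compactness, and compactness of `τX = Φ_X(X)` are equivalent. -/
theorem isKThetaCompact_tfae (X : Type u) [TopologicalSpace X]
    (h : ∀ x : X, ∃ W : Set X, IsCozeroSet X W ∧ x ∈ W ∧ IsWCompact (closure W)) :
    (IsKThetaCompact X ↔ IsWCompact X) ∧
      (IsWCompact X ↔ IsCompact (Set.range (evalMap X))) := by
  have hloc (x : X) : ∃ Z ∈ thetaNhds x, IsWCompact Z := by
    obtain ⟨W, hW, hxW, hWc⟩ := h x
    exact ⟨closure W, mem_of_superset (hW.mem_thetaNhds hxW) subset_closure, hWc⟩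
  have hk : IsKThetaCompact X → IsWCompact X := fun hk =>
    isWCompact_of_forall_exists_thetaNhds_inf_neBot hloc fun F _ => hk.exists_thetaNhds_inf_neBot F
  have hc : IsCompact (range (evalMap X)) → IsWCompact X := fun hc =>
    isWCompact_of_forall_exists_thetaNhds_inf_neBot hloc fun F _ =>
      exists_thetaNhds_inf_neBot_of_isCompact_range hc F
  exact ⟨⟨hk, fun hw => isKThetaCompact_of_isCompact_range hloc hw.isCompact_range_evalMap⟩,
    ⟨IsWCompact.isCompact_range_evalMap, hc⟩⟩
end

section
/- If a topological space X is K^θ-compact, then for every topological space Y the projection π_Y : X × Y → Y is a Z-map; that is, for every zero-set Z of X × Y (a set of the form Z = h^{-1}({0}) for some continuous h : X × Y → [0,1]), the image π_Y(Z) is closed in Y. -/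
open Set Topology

universe u

/-- If `X` is `K^θ`-compact, then every projection `π_Y : X × Y → Y` is a `Z`-map:
the image of every zero-set of `X × Y` is closed in `Y`. -/
theorem isKThetaCompact_proj_zmap (X : Type u) [TopologicalSpace X]
    (hX : IsKThetaCompact X) :
    ∀ (Y : Type u) [TopologicalSpace Y], ∀ h : C(X × Y, unitInterval),
      IsClosed (Prod.snd '' (h ⁻¹' {0})) := by
  intro Y _ h
  -- evalMap is continuous
  have heval : ∀ (W : Type u) [TopologicalSpace W], Continuous (evalMap W) := by
    intro W _
    exact continuous_pi fun f => f.continuous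
  -- thetaClosure of the zero set is itself
  have hzc : thetaClosure (X × Y) (h ⁻¹' {0}) = h ⁻¹' {0} := by
    apply Subset.antisymm
    · intro w hw
      have hw' : evalMap (X × Y) w ∈ closure (evalMap (X × Y) '' (h ⁻¹' {0})) := hw
      have hmap := (Continuous.continuousOn (continuous_apply h)).image_closure
        (s := evalMap (X × Y) '' (h ⁻¹' {0}))
      have : h w ∈ closure ((fun v => v h) '' (evalMap (X × Y) '' (h ⁻¹' {0}))) := by
        have := ((continuous_apply h).continuousWithinAt
          (s := evalMap (X × Y) '' (h ⁻¹' {0}))).mem_closure_image hw'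
        exact this
      have hsub : (fun v : C(X × Y, unitInterval) → unitInterval => v h) ''
          (evalMap (X × Y) '' (h ⁻¹' {0})) ⊆ {0} := by
        rintro _ ⟨_, ⟨z, hz, rfl⟩, rfl⟩
        exact hz
      have : h w ∈ closure ({0} : Set unitInterval) :=
        closure_mono hsub this
      rwa [closure_singleton] at this
    · intro w hw
      exact subset_closure (mem_image_of_mem _ hw)
  have key := hX Y (h ⁻¹' {0})
  rw [hzc] at key
  rw [key]
  exact (isClosed_closure).preimage (heval Y)
end

section
/- Let {G_i}_{i∈I} be a family of topological groups and, for each i, let S_i be a subgroup of G_i. In the product topological group ∏_{i∈I} G_i (with the product topology), the Bohr-closure is productive: c_b(∏_{i∈I} S_i) = ∏_{i∈I} c_b(S_i), where c_b(S_i) is computed in G_i. -/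
open Set Topology

universe u

/-- The Bohr-closure of a subset `S` of a topological group `G`: the set of `g ∈ G` such that
`f g ∈ cl(f(S))` for every continuous homomorphism `f` from `G` into a compact Hausdorff
topological group. -/
def bohrClosure (G : Type u) [Group G] [TopologicalSpace G] (S : Set G) : Set G :=
  {g : G | ∀ (K : Type u) [Group K] [TopologicalSpace K] [IsTopologicalGroup K]
    [CompactSpace K] [T2Space K] (f : G →* K), Continuous f → f g ∈ closure (f '' S)}

/-- The von Neumann kernel `n(G)` of a topological group `G`. -/
def vonNeumannKernel (G : Type u) [Group G] [TopologicalSpace G] : Set G :=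
  bohrClosure G {1}

/-- A topological group `G` is `c_b`-compact if for every topological group `Y` and every
subgroup `S` of `G × Y`, the projection `π_Y` preserves the Bohr-closure. -/
def IsCbCompact (G : Type u) [Group G] [TopologicalSpace G] [IsTopologicalGroup G] : Prop :=
  ∀ (Y : Type u) [Group Y] [TopologicalSpace Y] [IsTopologicalGroup Y] (S : Subgroup (G × Y)),
    Prod.snd '' bohrClosure (G × Y) (S : Set (G × Y)) =
      bohrClosure Y (Prod.snd '' (S : Set (G × Y)))

/-!
Projecting to a factor is a continuous homomorphism, and continuous homomorphisms carry
Bohr-closures into Bohr-closures; this gives `⊆`. Conversely, the Bohr-closure of the subgroup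
`∏ᵢ Sᵢ` is a closed subgroup of `∏ᵢ Gᵢ`, and it contains `Pi.mulSingle i (g i)` whenever
`g i ∈ c_b(Sᵢ)`, by the same mapping property applied to `Pi.mulSingle i`. A closed subgroup
containing all these elements contains their finite products, which converge to `g`.
-/

open Filter

theorem Finset.tendsto_piecewise_atTop {ι : Type*} {π : ι → Type*}
    [∀ i, TopologicalSpace (π i)] [DecidableEq ι] (f g : ∀ i, π i) :
    Tendsto (fun F : Finset ι => F.piecewise f g) atTop (𝓝 f) :=
  tendsto_pi_nhds.2 fun i => tendsto_nhds_of_eventually_eq <|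
    (eventually_ge_atTop {i}).mono fun _ hF =>
      Finset.piecewise_eq_of_mem _ _ _ (Finset.singleton_subset_iff.1 hF)

theorem Submonoid.pi_mem_of_mulSingle_mem_of_isClosed {η : Type*} {M : η → Type*}
    [∀ i, MulOneClass (M i)] [∀ i, TopologicalSpace (M i)] [DecidableEq η]
    {S : Type*} [SetLike S (∀ i, M i)] [SubmonoidClass S (∀ i, M i)] {H : S}
    (hH : IsClosed (H : Set (∀ i, M i))) (x : ∀ i, M i)
    (h : ∀ i, Pi.mulSingle i (x i) ∈ H) : x ∈ H :=
  hH.mem_of_tendsto (Finset.tendsto_piecewise_atTop x 1) <| Eventually.of_forall fun F =>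
    pi_mem_of_mulSingle_mem_aux F _ (fun i hi => Finset.piecewise_eq_of_notMem _ _ _ hi)
      fun i hi => by rw [Finset.piecewise_eq_of_mem _ _ _ hi]; exact h i

section BohrClosure

variable {G H : Type u} [Group G] [TopologicalSpace G] [Group H] [TopologicalSpace H]

theorem bohrClosure_mono {S T : Set G} (hST : S ⊆ T) : bohrClosure G S ⊆ bohrClosure G T :=
  fun _ hg K _ _ _ _ _ f hf => closure_mono (image_mono hST) (hg K f hf)

theorem mapsTo_bohrClosure {φ : G →* H} (hφ : Continuous φ) (S : Set G) :
    MapsTo φ (bohrClosure G S) (bohrClosure H (φ '' S)) := fun _ hg K _ _ _ _ _ f hf => by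
  rw [image_image]
  exact hg K (f.comp φ) (hf.comp hφ)

theorem isClosed_bohrClosure (S : Set G) : IsClosed (bohrClosure G S) :=
  isClosed_of_closure_subset fun _ hg K _ _ _ _ _ f hf =>
    closure_closure (s := f '' S) ▸ map_mem_closure hf hg fun _ hx => hx K f hf

-- `closure (f '' S)` is, by definition, the carrier of `(S.map f).topologicalClosure`.
def Subgroup.bohrClosure (S : Subgroup G) : Subgroup G where
  carrier := _root_.bohrClosure G S
  one_mem' K _ _ _ _ _ f _ := by
    rw [map_one]
    exact (S.map f).topologicalClosure.one_mem
  mul_mem' {a b} ha hb K _ _ _ _ _ f hf := by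
    rw [map_mul]
    exact (S.map f).topologicalClosure.mul_mem (ha K f hf) (hb K f hf)
  inv_mem' {a} ha K _ _ _ _ _ f hf := by
    rw [map_inv]
    exact (S.map f).topologicalClosure.inv_mem (ha K f hf)

end BohrClosure

theorem bohrClosure_pi_general {ι : Type u} (G : ι → Type u)
    [∀ i, Group (G i)] [∀ i, TopologicalSpace (G i)]
    (S : ∀ i, Subgroup (G i)) :
    bohrClosure (∀ i, G i) (Set.pi Set.univ fun i => (S i : Set (G i))) =
      Set.pi Set.univ fun i => bohrClosure (G i) (S i : Set (G i)) := by
  classical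
  rw [← Subgroup.coe_pi]
  refine Subset.antisymm (fun g hg i _ => ?_) fun g hg => ?_
  · have hproj := mapsTo_bohrClosure (φ := Pi.evalMonoidHom G i) (continuous_apply i) _ hg
    rwa [Pi.coe_evalMonoidHom, Subgroup.coe_pi,
      eval_image_univ_pi ⟨1, fun j _ => (S j).one_mem⟩] at hproj
  · refine Submonoid.pi_mem_of_mulSingle_mem_of_isClosed (H := (Subgroup.pi univ S).bohrClosure)
      (isClosed_bohrClosure _) g fun i => ?_
    have hsingle : MonoidHom.mulSingle G i '' S i ⊆ Subgroup.pi univ S := by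
      rintro _ ⟨s, hs, rfl⟩
      exact (Subgroup.mulSingle_mem_pi i s).2 fun _ => hs
    exact bohrClosure_mono hsingle <|
      mapsTo_bohrClosure (continuous_mulSingle i) _ (hg i (mem_univ i))

/-- The Bohr-closure is productive: in a product `∏ᵢ Gᵢ` of topological groups,
`c_b(∏ᵢ Sᵢ) = ∏ᵢ c_b(Sᵢ)` for subgroups `Sᵢ ≤ Gᵢ`. -/
theorem bohrClosure_pi {ι : Type u} (G : ι → Type u)
    [∀ i, Group (G i)] [∀ i, TopologicalSpace (G i)] [∀ i, IsTopologicalGroup (G i)]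
    (S : ∀ i, Subgroup (G i)) :
    bohrClosure (∀ i, G i) (Set.pi Set.univ fun i => (S i : Set (G i))) =
      Set.pi Set.univ fun i => bohrClosure (G i) (S i : Set (G i)) :=
  bohrClosure_pi_general G S
end

section
/- A topological group G is c_b-separated — that is, the diagonal subgroup Δ_G = {(g,g) | g ∈ G} of G × G satisfies c_b(Δ_G) = Δ_G — if and only if G is maximally almost periodic, i.e. n(G) = {1}. -/
open Set Topology

universe u

/-! The Bohr-closure of the diagonal of `G × G` is `{(a, b) | a * b⁻¹ ∈ n(G)}`: a pair in it is
identified by every continuous `f : G → K` into a compact group, because the diagonal of `K × K`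
is closed; conversely `(a, b) = (a * b⁻¹, 1) * (b, b)`, and every `F : G × G → K` kills
`(a * b⁻¹, 1)` when `a * b⁻¹ ∈ n(G)`. So the diagonal is Bohr-closed exactly when `n(G) = {1}`. -/

section BohrClosure

variable {G : Type u} [Group G] [TopologicalSpace G]

theorem subset_bohrClosure (S : Set G) : S ⊆ bohrClosure G S :=
  fun _ hg _ _ _ _ _ _ f _ => subset_closure (mem_image_of_mem f hg)

theorem one_mem_vonNeumannKernel : (1 : G) ∈ vonNeumannKernel G :=
  subset_bohrClosure _ rfl

theorem mem_vonNeumannKernel_iff {g : G} :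
    g ∈ vonNeumannKernel G ↔ ∀ (K : Type u) [Group K] [TopologicalSpace K]
      [IsTopologicalGroup K] [CompactSpace K] [T2Space K] (f : G →* K), Continuous f → f g = 1 := by
  constructor
  · intro h K _ _ _ _ _ f hf
    simpa using h K f hf
  · intro h K _ _ _ _ _ f hf
    simp [h K f hf]

theorem bohrClosure_diagonal :
    bohrClosure (G × G) {q : G × G | q.1 = q.2} = {q : G × G | q.1 * q.2⁻¹ ∈ vonNeumannKernel G} := by
  ext ⟨a, b⟩
  constructor
  · intro hab
    refine mem_vonNeumannKernel_iff.mpr fun K _ _ _ _ _ f hf => ?_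
    have hclosed : IsClosed {p : K × K | p.1 = p.2} := isClosed_eq continuous_fst continuous_snd
    have himage : f.prodMap f '' {q : G × G | q.1 = q.2} ⊆ {p : K × K | p.1 = p.2} := by
      rintro _ ⟨q, hq, rfl⟩
      exact congrArg f hq
    have hfab : f a = f b := closure_minimal himage hclosed (hab _ _ (hf.prodMap hf))
    rw [map_mul, map_inv, hfab, mul_inv_cancel]
  · intro hab K _ _ _ _ _ F hF
    have hinl : F (a * b⁻¹, 1) = 1 :=
      mem_vonNeumannKernel_iff.mp hab K (F.comp (MonoidHom.inl G G))
        (hF.comp (continuous_id.prodMk continuous_const))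
    have hsplit : F (a, b) = F (b, b) := by
      rw [show ((a, b) : G × G) = (a * b⁻¹, 1) * (b, b) by simp, map_mul, hinl, one_mul]
    rw [hsplit]
    exact subset_closure (mem_image_of_mem F rfl)

end BohrClosure

theorem bohrClosure_diagonal_eq_iff_general (G : Type u) [Group G] [TopologicalSpace G] :
    bohrClosure (G × G) {q : G × G | q.1 = q.2} = {q : G × G | q.1 = q.2} ↔
      vonNeumannKernel G = {1} := by
  rw [bohrClosure_diagonal]
  constructor
  · intro hΔ
    refine eq_singleton_iff_unique_mem.mpr ⟨one_mem_vonNeumannKernel, fun g hg => ?_⟩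
    have hg1 : ((g, 1) : G × G) ∈ {q : G × G | q.1 * q.2⁻¹ ∈ vonNeumannKernel G} := by
      simpa using hg
    rw [hΔ] at hg1
    exact hg1
  · intro hn
    ext q
    simp only [hn, mem_ofPred_eq, mem_singleton_iff, mul_inv_eq_one]

/-- A topological group `G` is `c_b`-separated (the diagonal is `c_b`-closed in `G × G`)
if and only if `G` is maximally almost periodic, i.e. `n(G) = {1}`. -/
theorem bohrClosure_diagonal_eq_iff (G : Type u) [Group G] [TopologicalSpace G]
    [IsTopologicalGroup G] :
    bohrClosure (G × G) {q : G × G | q.1 = q.2} = {q : G × G | q.1 = q.2} ↔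
      vonNeumannKernel G = {1} :=
  bohrClosure_diagonal_eq_iff_general G
end

section
/- Let G be a locally compact Hausdorff topological group that is c_b-compact. Then every continuous group homomorphism α : G → (ℝ, +) into the additive group of the real numbers is trivial. -/
open Set Topology

universe u

/-!
If `α g₀ ≠ 0`, let `S ≤ G × ℝ/ℤ` be generated by `(g₀, √2 mod 1)`. Its projection to `ℝ/ℤ` is
dense, so `c_b`-compactness gives, for every real `t`, some `g` with `(g, t mod 1)` in the
Bohr-closure of `S`. The characters `(x, y) ↦ α x / α g₀` and `(x, y) ↦ y - √2 · α x / α g₀`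
(mod 1) vanish on `S`, hence at `(g, t mod 1)`, which puts `t` in `√2 ℤ + ℤ`. But a countable set
cannot contain every real number.
-/

section BohrClosure

variable {H : Type u} [Group H] [TopologicalSpace H]

theorem closure_subset_bohrClosure (S : Set H) : closure S ⊆ bohrClosure H S :=
  fun _ hx _ _ _ _ _ _ f hf => image_closure_subset_closure_image hf (mem_image_of_mem f hx)

theorem bohrClosure_subset_ker {K : Type u} [Group K] [TopologicalSpace K] [IsTopologicalGroup K]
    [CompactSpace K] [T2Space K] {f : H →* K} (hf : Continuous f) {S : Set H}
    (hS : S ⊆ f.ker) : bohrClosure H S ⊆ f.ker := fun _ hx =>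
  closure_minimal (image_subset_iff.2 hS : f '' S ⊆ {1}) isClosed_singleton (hx K f hf)

theorem map_eq_one_of_mem_bohrClosure_zpowers {K : Type u} [Group K] [TopologicalSpace K]
    [IsTopologicalGroup K] [CompactSpace K] [T2Space K] {f : H →* K} (hf : Continuous f) {s : H}
    (hs : f s = 1) {h : H} (hh : h ∈ bohrClosure H (Subgroup.zpowers s)) : f h = 1 :=
  bohrClosure_subset_ker hf (SetLike.coe_subset_coe.2 (Subgroup.zpowers_le.2 hs)) hh

end BohrClosure

theorem IsCbCompact.exists_mem_bohrClosure {G : Type u} [Group G] [TopologicalSpace G]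
    [IsTopologicalGroup G] (hcb : IsCbCompact G) {Y : Type u} [Group Y] [TopologicalSpace Y]
    [IsTopologicalGroup Y] {S : Subgroup (G × Y)} (hS : Dense (Prod.snd '' (S : Set (G × Y))))
    (y : Y) : ∃ g : G, (g, y) ∈ bohrClosure (G × Y) S := by
  have hy : y ∈ bohrClosure Y (Prod.snd '' (S : Set (G × Y))) := closure_subset_bohrClosure _ (hS y)
  rw [← hcb Y S] at hy
  obtain ⟨⟨g, _⟩, hg, rfl⟩ := hy
  exact ⟨g, hg⟩

/-- `ℝ/ℤ`, written multiplicatively and lifted to `Type u`, so that it can serve both as a compact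
group `K` in `bohrClosure` and as the factor `Y` in `IsCbCompact`. -/
abbrev RealModInt : Type u := ULift.{u} (Multiplicative (AddCircle (1 : ℝ)))

namespace RealModInt

def mk (x : ℝ) : RealModInt.{u} := ⟨.ofAdd x⟩

theorem mk_eq_one_iff {x : ℝ} : mk.{u} x = 1 ↔ ∃ n : ℤ, x = n := by
  rw [mk, ULift.ext_iff, ULift.one_down, ofAdd_eq_one, AddCircle.coe_eq_zero_iff]
  simp only [zsmul_eq_mul, mul_one, eq_comm]

theorem mk_one : mk.{u} 1 = 1 :=
  mk_eq_one_iff.2 ⟨1, Int.cast_one.symm⟩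

theorem continuous_mk : Continuous mk.{u} :=
  continuous_uliftUp.comp (continuous_ofAdd.comp (AddCircle.continuous_mk' 1))

theorem denseRange_zpow_mk {θ : ℝ} (hθ : Irrational θ) :
    DenseRange (mk.{u} θ ^ · : ℤ → RealModInt) :=
  (ULift.up_surjective.comp Multiplicative.ofAdd.surjective).denseRange.comp
    (AddCircle.denseRange_zsmul_coe_iff.2 (by rwa [div_one]))
    (continuous_uliftUp.comp continuous_ofAdd)

variable {G : Type u} [Group G]

def charOf (α : G → ℝ) (hα : ∀ x y : G, α (x * y) = α x + α y) (c : ℝ) : G →* RealModInt.{u} :=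
  MonoidHom.mk' (fun x => mk (c * α x)) fun x y => by rw [hα, mul_add]; rfl

theorem continuous_charOf [TopologicalSpace G] {α : G → ℝ} (hαc : Continuous α)
    (hα : ∀ x y : G, α (x * y) = α x + α y) (c : ℝ) : Continuous (charOf α hα c) :=
  continuous_mk.comp (continuous_const.mul hαc)

end RealModInt

theorem cbCompact_hom_to_real_trivial_general (G : Type u) [Group G] [TopologicalSpace G]
    [IsTopologicalGroup G]
    (hcb : IsCbCompact G)
    (α : G → ℝ) (hαc : Continuous α) (hα : ∀ x y : G, α (x * y) = α x + α y) :
    ∀ g : G, α g = 0 := by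
  intro g₀
  by_contra ha
  set θ := √2
  let S : Subgroup (G × RealModInt.{u}) := Subgroup.zpowers (g₀, RealModInt.mk θ)
  have hS : Dense (Prod.snd '' (S : Set (G × RealModInt))) := by
    rw [← MonoidHom.coe_snd, ← Subgroup.coe_map, MonoidHom.map_zpowers, Subgroup.coe_zpowers]
    exact RealModInt.denseRange_zpow_mk irrational_sqrt_two
  have hcover (t : ℝ) : ∃ k : ℤ × ℤ, θ * k.1 + k.2 = t := by
    obtain ⟨g, hg⟩ := hcb.exists_mem_bohrClosure hS (RealModInt.mk t)
    let χ₁ := (RealModInt.charOf α hα (α g₀)⁻¹).comp (MonoidHom.fst G RealModInt.{u})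
    let χ₂ := MonoidHom.snd G RealModInt.{u} /
      (RealModInt.charOf α hα (θ / α g₀)).comp (MonoidHom.fst G RealModInt.{u})
    have hχ₁ : χ₁ (g, RealModInt.mk t) = 1 :=
      map_eq_one_of_mem_bohrClosure_zpowers (f := χ₁)
        ((RealModInt.continuous_charOf hαc hα _).comp continuous_fst)
        (by simp [χ₁, RealModInt.charOf, ha, RealModInt.mk_one]) hg
    have hχ₂ : χ₂ (g, RealModInt.mk t) = 1 :=
      map_eq_one_of_mem_bohrClosure_zpowers (f := χ₂)
        (continuous_snd.div' ((RealModInt.continuous_charOf hαc hα _).comp continuous_fst))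
        (by simp [χ₂, RealModInt.charOf, ha]) hg
    obtain ⟨m, hm⟩ : ∃ m : ℤ, (α g₀)⁻¹ * α g = m := RealModInt.mk_eq_one_iff.1 hχ₁
    obtain ⟨n, hn⟩ : ∃ n : ℤ, t - θ / α g₀ * α g = n := RealModInt.mk_eq_one_iff.1 hχ₂
    exact ⟨(m, n), by linear_combination -(θ * hm) - hn⟩
  have : (univ : Set ℝ).Countable :=
    (countable_range fun k : ℤ × ℤ => θ * k.1 + k.2).mono fun t _ => hcover t
  exact Cardinal.not_countable_real this

/-- Every continuous homomorphism from a locally compact Hausdorff `c_b`-compact topological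
group into the additive group `(ℝ, +)` is trivial. -/
theorem cbCompact_hom_to_real_trivial (G : Type u) [Group G] [TopologicalSpace G]
    [IsTopologicalGroup G] [LocallyCompactSpace G] [T2Space G]
    (hcb : IsCbCompact G)
    (α : G → ℝ) (hαc : Continuous α) (hα : ∀ x y : G, α (x * y) = α x + α y) :
    ∀ g : G, α g = 0 :=
  cbCompact_hom_to_real_trivial_general G hcb α hαc hα
end

section
/- Every continuous group homomorphism from SL₂(ℝ) into a compact Hausdorff topological group is trivial; that is, SL₂(ℝ) is minimally almost periodic. In particular, the von Neumann kernel n(SL₂(ℝ)) is all of SL₂(ℝ). -/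
open Set Topology

universe u

/-- `SL₂(ℝ)`, topologized as a subspace of the `2 × 2` real matrices. -/
instance : TopologicalSpace (Matrix.SpecialLinearGroup (Fin 2) ℝ) :=
  inferInstanceAs (TopologicalSpace {A : Matrix (Fin 2) (Fin 2) ℝ // A.det = 1})

/-! A continuous homomorphism `f` from `SL₂(F)` to a compact group kills every transvection `T`:
conjugating by `diag(a, a⁻¹)` turns `T(b)` into `T(a²b)`, so `1 = lim_{a → 0} T(a²b)` lies in
the closure of the conjugacy class of `T(b)`. Hence `1` lies in the closure of the conjugacy
class of `f(T(b))`, which is compact and therefore closed, so `f(T(b))` is conjugate, hence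
equal, to `1`. Transvections generate `SL₂(F)`. -/

theorem isClosed_conjugatesOf {K : Type*} [Group K] [TopologicalSpace K] [IsTopologicalGroup K]
    [CompactSpace K] [T2Space K] (a : K) : IsClosed (conjugatesOf a) := by
  have : conjugatesOf a = range fun c : K => c * a * c⁻¹ := by
    ext b
    simp [conjugatesOf, isConj_iff]
  rw [this]
  exact (isCompact_range (by fun_prop)).isClosed

theorem MonoidHom.eq_one_of_one_mem_closure_conjugatesOf {G K : Type*} [Group G]
    [TopologicalSpace G] [Group K] [TopologicalSpace K] [IsTopologicalGroup K]
    [CompactSpace K] [T2Space K] (f : G →* K) (hf : Continuous f) {g : G}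
    (hg : 1 ∈ closure (conjugatesOf g)) : f g = 1 := by
  have : f 1 ∈ closure (conjugatesOf (f g)) := map_mem_closure hf hg fun _ => f.map_isConj
  rw [(isClosed_conjugatesOf _).closure_eq, map_one] at this
  exact isConj_one_left.mp this

theorem vonNeumannKernel_eq_univ {G : Type u} [Group G] [TopologicalSpace G]
    (h : ∀ (K : Type u) [Group K] [TopologicalSpace K] [IsTopologicalGroup K]
      [CompactSpace K] [T2Space K] (f : G →* K), Continuous f → ∀ g, f g = 1) :
    vonNeumannKernel G = univ := by
  refine eq_univ_of_forall fun g K _ _ _ _ _ f hf => ?_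
  rw [h K f hf g]
  exact subset_closure ⟨1, rfl, map_one f⟩

namespace Matrix.SpecialLinearGroup

variable {ι F : Type*} [Fintype ι] [DecidableEq ι] [Field F]

theorem isConj_transvection_sq_mul {i j : ι} (hij : i ≠ j) (b : F) {a : F} (ha : a ≠ 0) :
    IsConj (transvection hij b) (transvection hij (a ^ 2 * b)) := by
  refine ⟨toUnits (diag2n hij a ha), Subtype.ext ?_⟩
  ext k l
  simp only [val_toUnits_apply, coe_mul, diag2n_coe, transvection_coe, diagonal_mul,
    mul_diagonal, add_apply, one_apply, single_apply, mul_add, add_mul, mul_ite, ite_mul, mul_one,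
    one_mul, mul_zero, zero_mul]
  grind

variable [TopologicalSpace F] [IsTopologicalRing F]

theorem continuous_transvection {i j : ι} (hij : i ≠ j) :
    Continuous (transvection hij : F → SpecialLinearGroup ι F) := by
  refine Continuous.subtype_mk (continuous_matrix fun k l => ?_) _
  simp only [Matrix.transvection, add_apply, single_apply]
  exact continuous_const.add (continuous_id.if_const _ continuous_const)

theorem one_mem_closure_conjugatesOf_transvection [(𝓝[≠] (0 : F)).NeBot] {i j : ι}
    (hij : i ≠ j) (b : F) : 1 ∈ closure (conjugatesOf (transvection hij b)) := by
  have hlim :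
      Filter.Tendsto (fun a : F => transvection hij (a ^ 2 * b)) (𝓝[≠] 0) (𝓝 1) := by
    have hcont : Continuous fun a : F => transvection hij (a ^ 2 * b) :=
      (continuous_transvection hij).comp (by fun_prop)
    simpa using (hcont.tendsto 0).mono_left nhdsWithin_le_nhds
  exact mem_closure_of_tendsto hlim <|
    eventually_nhdsWithin_of_forall fun a ha => isConj_transvection_sq_mul hij b ha

theorem SL2_apply_eq_one_of_continuous [(𝓝[≠] (0 : F)).NeBot] {K : Type*} [Group K]
    [TopologicalSpace K] [IsTopologicalGroup K] [CompactSpace K] [T2Space K]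
    (f : SpecialLinearGroup (Fin 2) F →* K) (hf : Continuous f)
    (A : SpecialLinearGroup (Fin 2) F) : f A = 1 :=
  SL2.transvection_induction (fun A => f A = 1)
    (fun _ _ h b => f.eq_one_of_one_mem_closure_conjugatesOf hf
      (one_mem_closure_conjugatesOf_transvection h b))
    (fun A B hA hB => by rw [map_mul, hA, hB, one_mul]) A

end Matrix.SpecialLinearGroup

/-- `SL₂(ℝ)` is minimally almost periodic: every continuous homomorphism into a compact
Hausdorff topological group is trivial; in particular `n(SL₂(ℝ)) = SL₂(ℝ)`. -/
theorem SL2R_minimally_almost_periodic :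
    (∀ (K : Type) [Group K] [TopologicalSpace K] [IsTopologicalGroup K]
        [CompactSpace K] [T2Space K] (f : Matrix.SpecialLinearGroup (Fin 2) ℝ →* K),
        Continuous f → ∀ g, f g = 1) ∧
      vonNeumannKernel (Matrix.SpecialLinearGroup (Fin 2) ℝ) = Set.univ := by
  have trivial_hom : ∀ (K : Type) [Group K] [TopologicalSpace K] [IsTopologicalGroup K]
      [CompactSpace K] [T2Space K] (f : Matrix.SpecialLinearGroup (Fin 2) ℝ →* K),
      Continuous f → ∀ g, f g = 1 :=
    fun _ _ _ _ _ _ f hf => Matrix.SpecialLinearGroup.SL2_apply_eq_one_of_continuous f hf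
  exact ⟨trivial_hom, vonNeumannKernel_eq_univ trivial_hom⟩
end

section
/- Let A be a Hausdorff abelian topological group in which every proper subgroup is finite. If the von Neumann kernel n(A) satisfies n(A) ≠ A and n(A) ≠ {0}, then the von Neumann kernel of the topological group n(A) (endowed with the subspace topology) is trivial: n(n(A)) = {0}; in particular n(n(A)) ≠ n(A), so the Bohr-closure operator c_b is not weakly hereditary. -/
open Set Topology

universe u

/-- The Bohr-closure of a subset `S` of a topological additive group `G`: the set of `g ∈ G`
such that `f g ∈ cl(f(S))` for every continuous homomorphism `f` from `G` into a compact
Hausdorff topological additive group. -/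
def addBohrClosure (G : Type u) [AddGroup G] [TopologicalSpace G] (S : Set G) : Set G :=
  {g : G | ∀ (K : Type u) [AddGroup K] [TopologicalSpace K] [IsTopologicalAddGroup K]
    [CompactSpace K] [T2Space K] (f : G →+ K), Continuous f → f g ∈ closure (f '' S)}

/-- The von Neumann kernel `n(G)` of a topological additive group `G`. -/
def addVonNeumannKernel (G : Type u) [AddGroup G] [TopologicalSpace G] : Set G :=
  addBohrClosure G {0}

/- A proper subgroup of `A` is finite, so `n(A)` is a compact Hausdorff group, and the identity
of a compact Hausdorff group already separates all its points from `0`. -/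

theorem subset_addBohrClosure (G : Type u) [AddGroup G] [TopologicalSpace G] (S : Set G) :
    S ⊆ addBohrClosure G S :=
  fun _ hg _ _ _ _ _ _ f _ => subset_closure (mem_image_of_mem f hg)

theorem addVonNeumannKernel_eq_zero (G : Type u) [AddGroup G] [TopologicalSpace G]
    [IsTopologicalAddGroup G] [CompactSpace G] [T2Space G] :
    addVonNeumannKernel G = {0} := by
  refine Subset.antisymm (fun g hg => ?_) (subset_addBohrClosure G {0})
  simpa using hg G (AddMonoidHom.id G) continuous_id

/-- Let `A` be a Hausdorff abelian topological group in which every proper subgroup is finite.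
If `{0} ≠ n(A) ≠ A`, then the von Neumann kernel of the subgroup `n(A)` (with the subspace
topology) is trivial; in particular `n(n(A)) ≠ n(A)`, so the Bohr-closure is not weakly
hereditary. -/
theorem vonNeumannKernel_of_vonNeumannKernel (A : Type u) [AddCommGroup A]
    [TopologicalSpace A] [IsTopologicalAddGroup A] [T2Space A]
    (hfin : ∀ S : AddSubgroup A, S ≠ ⊤ → (S : Set A).Finite)
    (N : AddSubgroup A) (hN : (N : Set A) = addVonNeumannKernel A)
    (hne_top : addVonNeumannKernel A ≠ Set.univ)
    (hne_bot : addVonNeumannKernel A ≠ ({0} : Set A)) :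
    addVonNeumannKernel N = ({0} : Set N) ∧ addVonNeumannKernel N ≠ Set.univ := by
  have hN_top : N ≠ ⊤ := fun h => hne_top (hN ▸ AddSubgroup.coe_eq_univ.mpr h)
  have hN_bot : N ≠ ⊥ := fun h => hne_bot (hN ▸ h ▸ AddSubgroup.coe_bot)
  have : Finite N := hfin N hN_top
  have : Nontrivial N := (AddSubgroup.nontrivial_iff_ne_bot N).mpr hN_bot
  have hker : addVonNeumannKernel N = {0} := addVonNeumannKernel_eq_zero N
  exact ⟨hker, hker ▸ singleton_ne_univ 0⟩
end

section
/- Let A be a complex *-algebra, p a C*-seminorm on A, σ a submultiplicative seminorm on A, and C ≥ 0 a constant with p(x) ≤ C·σ(x) for all x ∈ A. Then p(a)² ≤ σ(a* a) for every a ∈ A. Consequently, if moreover σ(a*) ≤ D·σ(a) for all a ∈ A and some constant D ≥ 0, then p(a) ≤ √D·σ(a) for all a ∈ A. -/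
/-!
For self-adjoint `b` the C*-identity gives `p (b ^ 2 ^ n) = p b ^ 2 ^ n`, while submultiplicativity
of `σ` gives `σ (b ^ 2 ^ n) ≤ σ b ^ 2 ^ n`. Hence `p b ^ 2 ^ n ≤ C * σ b ^ 2 ^ n` for all `n`, and
letting `n → ∞` after taking `2 ^ n`-th roots, `p b ≤ σ b`. Applied to `b = star a * a` this is
`p a ^ 2 ≤ σ (star a * a)`, and `σ (star a * a) ≤ σ (star a) * σ a ≤ D * σ a ^ 2`.
-/

open Filter Topology

theorem le_of_forall_pow_two_pow_le_mul {x y C : ℝ} (hy : 0 ≤ y)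
    (h : ∀ n : ℕ, x ^ 2 ^ n ≤ C * y ^ 2 ^ n) : x ≤ y := by
  by_contra! hyx
  have hx : 0 < x := hy.trans_lt hyx
  have hlim : Tendsto (fun n : ℕ ↦ C * (y / x) ^ 2 ^ n) atTop (𝓝 0) := by
    simpa using ((tendsto_pow_atTop_nhds_zero_of_lt_one (div_nonneg hy hx.le)
      ((div_lt_one hx).2 hyx)).comp (tendsto_pow_atTop_atTop_of_one_lt one_lt_two)).const_mul C
  obtain ⟨n, hn⟩ := (hlim.eventually (gt_mem_nhds one_pos)).exists
  rw [div_pow, mul_div_assoc', div_lt_one (by positivity)] at hn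
  linarith [h n]

theorem IsSelfAdjoint.map_pow_two_pow {A : Type*} [Monoid A] [StarMul A] {p : A → ℝ}
    (hp : ∀ a : A, p (star a * a) = p a ^ 2) {b : A} (hb : IsSelfAdjoint b) (n : ℕ) :
    p (b ^ 2 ^ n) = p b ^ 2 ^ n := by
  induction n with
  | zero => simp
  | succ n ih =>
    have h := hp (b ^ 2 ^ n)
    rw [(hb.pow _).star_eq] at h
    rw [pow_succ, pow_mul, sq, h, ih, ← pow_mul]

namespace Seminorm

variable {𝕜 A : Type*} [SeminormedRing 𝕜] [Ring A] [SMul 𝕜 A]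

theorem map_pow_le_pow_of_map_mul_le (σ : Seminorm 𝕜 A)
    (hσ : ∀ a b : A, σ (a * b) ≤ σ a * σ b) (x : A) {n : ℕ} (hn : n ≠ 0) :
    σ (x ^ n) ≤ σ x ^ n :=
  map_pow_le_pow ({ σ with mul_le' := hσ } : RingSeminorm A) x hn

theorem le_of_isSelfAdjoint_of_le_mul [StarMul A] (p σ : Seminorm 𝕜 A)
    (hpcstar : ∀ a : A, p (star a * a) = p a ^ 2) (hσsub : ∀ a b : A, σ (a * b) ≤ σ a * σ b)
    {C : ℝ} (hC : 0 ≤ C) (hle : ∀ x : A, p x ≤ C * σ x) {b : A} (hb : IsSelfAdjoint b) :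
    p b ≤ σ b := by
  refine le_of_forall_pow_two_pow_le_mul (C := C) (apply_nonneg σ b) fun n ↦ ?_
  calc p b ^ 2 ^ n = p (b ^ 2 ^ n) := (hb.map_pow_two_pow hpcstar n).symm
    _ ≤ C * σ (b ^ 2 ^ n) := hle _
    _ ≤ C * σ b ^ 2 ^ n := by
      gcongr
      exact σ.map_pow_le_pow_of_map_mul_le hσsub b (pow_ne_zero n two_ne_zero)

end Seminorm

theorem cstarSeminorm_sq_le_of_le_smul_general {A : Type*} [Ring A] [Algebra ℂ A] [StarRing A]
    [StarModule ℂ A] (p σ : Seminorm ℂ A)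
    (hpcstar : ∀ a : A, p (star a * a) = p a ^ 2)
    (hσsub : ∀ a b : A, σ (a * b) ≤ σ a * σ b)
    (C : ℝ) (hC : 0 ≤ C) (hle : ∀ x : A, p x ≤ C * σ x) :
    (∀ a : A, p a ^ 2 ≤ σ (star a * a)) ∧
      ∀ D : ℝ, 0 ≤ D → (∀ a : A, σ (star a) ≤ D * σ a) →
        ∀ a : A, p a ≤ Real.sqrt D * σ a := by
  have hsq (a : A) : p a ^ 2 ≤ σ (star a * a) := by
    rw [← hpcstar a]
    exact p.le_of_isSelfAdjoint_of_le_mul σ hpcstar hσsub hC hle (.star_mul_self a)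
  refine ⟨hsq, fun D hD hstar a ↦ ?_⟩
  refine (pow_le_pow_iff_left₀ (apply_nonneg p a) (by positivity) two_ne_zero).1 ?_
  calc p a ^ 2 ≤ σ (star a * a) := hsq a
    _ ≤ σ (star a) * σ a := hσsub _ _
    _ ≤ D * σ a * σ a := by gcongr; exact hstar a
    _ = (Real.sqrt D * σ a) ^ 2 := by rw [mul_pow, Real.sq_sqrt hD]; ring

/-- Let `p` be a C*-seminorm and `σ` a submultiplicative seminorm on a complex `*`-algebra `A`,
with `p ≤ C·σ`. Then `p(a)² ≤ σ(a* a)`; consequently, if `σ(a*) ≤ D·σ(a)`, then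
`p(a) ≤ √D·σ(a)`. -/
theorem cstarSeminorm_sq_le_of_le_smul {A : Type*} [Ring A] [Algebra ℂ A] [StarRing A]
    [StarModule ℂ A] (p σ : Seminorm ℂ A)
    (hpsub : ∀ a b : A, p (a * b) ≤ p a * p b)
    (hpcstar : ∀ a : A, p (star a * a) = p a ^ 2)
    (hσsub : ∀ a b : A, σ (a * b) ≤ σ a * σ b)
    (C : ℝ) (hC : 0 ≤ C) (hle : ∀ x : A, p x ≤ C * σ x) :
    (∀ a : A, p a ^ 2 ≤ σ (star a * a)) ∧
      ∀ D : ℝ, 0 ≤ D → (∀ a : A, σ (star a) ≤ D * σ a) →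
        ∀ a : A, p a ≤ Real.sqrt D * σ a :=
  cstarSeminorm_sq_le_of_le_smul_general p σ hpcstar hσsub C hC hle
end
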